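/- arXiv:math-ph/0212029 — 4 statements merged into one kernel-verified Lean document; each statement's English description precedes it below -/
import Mathlib

section
/- Let G be an orthogonal projection on a complex inner product space, φ a nonzero vector, and ψ any vector orthogonal to φ. Then |⟨ψ, G φ⟩|² ≤ ‖ψ‖² ‖φ‖² ⟨G⟩_φ (1 - ⟨G⟩_φ), where ⟨G⟩_φ = ⟨φ, G φ⟩/‖φ‖². -/
/-!
If `ψ ⟂ φ`, then `⟪ψ, u⟫` only sees the component of `u` orthogonal to `φ`, whose squared norm is
`‖u‖² - |⟪φ, u⟫|² / ‖φ‖²` by Pythagoras; Cauchy–Schwarz bounds `|⟪ψ, u⟫|²` by `‖ψ‖²` times it.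
For `u = G φ` with `G` an orthogonal projection, `⟪φ, G φ⟫ = ⟪G φ, G φ⟫ = ‖G φ‖²`, so this bound is
`‖ψ‖² (r - r² / ‖φ‖²)` with `r = ⟪φ, G φ⟫`, which is the claimed right-hand side.
-/

open scoped InnerProductSpace

section

variable {𝕜 E : Type*} [RCLike 𝕜] [NormedAddCommGroup E] [InnerProductSpace 𝕜 E]

theorem norm_sq_starProjection_orthogonal_singleton (φ u : E) :
    ‖(𝕜 ∙ φ)ᗮ.starProjection u‖ ^ 2 = ‖u‖ ^ 2 - ‖⟪φ, u⟫_𝕜‖ ^ 2 / ‖φ‖ ^ 2 := by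
  rw [Submodule.norm_sq_eq_add_norm_sq_starProjection u (𝕜 ∙ φ),
    Submodule.starProjection_singleton, norm_smul, norm_div, RCLike.norm_ofReal,
    abs_of_nonneg (by positivity)]
  by_cases hφ : φ = 0
  · simp [hφ]
  · field_simp
    ring

theorem norm_inner_sq_le_of_inner_eq_zero {φ ψ : E} (hperp : ⟪ψ, φ⟫_𝕜 = 0) (u : E) :
    ‖⟪ψ, u⟫_𝕜‖ ^ 2 ≤ ‖ψ‖ ^ 2 * (‖u‖ ^ 2 - ‖⟪φ, u⟫_𝕜‖ ^ 2 / ‖φ‖ ^ 2) := by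
  have hψ : ψ ∈ (𝕜 ∙ φ)ᗮ := Submodule.mem_orthogonal_singleton_iff_inner_left.mpr hperp
  have hinner : ⟪ψ, u⟫_𝕜 = ⟪ψ, (𝕜 ∙ φ)ᗮ.starProjection u⟫_𝕜 := by
    rw [← Submodule.inner_starProjection_left_eq_right,
      Submodule.starProjection_eq_self_iff.mpr hψ]
  calc ‖⟪ψ, u⟫_𝕜‖ ^ 2 ≤ (‖ψ‖ * ‖(𝕜 ∙ φ)ᗮ.starProjection u‖) ^ 2 := by
        rw [hinner]
        gcongr
        exact norm_inner_le_norm _ _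
    _ = ‖ψ‖ ^ 2 * (‖u‖ ^ 2 - ‖⟪φ, u⟫_𝕜‖ ^ 2 / ‖φ‖ ^ 2) := by
        rw [mul_pow, norm_sq_starProjection_orthogonal_singleton]

theorem LinearMap.IsSymmetric.inner_apply_self_eq_norm_sq_of_comp_self {G : E →ₗ[𝕜] E}
    (hsymm : G.IsSymmetric) (hidem : G ∘ₗ G = G) (φ : E) :
    ⟪φ, G φ⟫_𝕜 = (‖G φ‖ ^ 2 : ℝ) := by
  calc ⟪φ, G φ⟫_𝕜 = ⟪φ, G (G φ)⟫_𝕜 := by rw [← LinearMap.comp_apply, hidem]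
    _ = ⟪G φ, G φ⟫_𝕜 := (hsymm φ (G φ)).symm
    _ = (‖G φ‖ ^ 2 : ℝ) := by rw [inner_self_eq_norm_sq_to_K, RCLike.ofReal_pow]

end

theorem projection_overlap_bound
    {E : Type*} [NormedAddCommGroup E] [InnerProductSpace ℂ E]
    (G : E →ₗ[ℂ] E) (hsymm : G.IsSymmetric) (hidem : G ∘ₗ G = G)
    (φ : E) (hφ : φ ≠ 0) (ψ : E) (hperp : ⟪ψ, φ⟫_ℂ = 0) :
    ‖⟪ψ, G φ⟫_ℂ‖ ^ 2 ≤
      ‖ψ‖^2 * ‖φ‖^2 * ((⟪φ, G φ⟫_ℂ).re / ‖φ‖^2) *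
        (1 - (⟪φ, G φ⟫_ℂ).re / ‖φ‖^2) := by
  have hGφ := hsymm.inner_apply_self_eq_norm_sq_of_comp_self hidem φ
  have hre : (⟪φ, G φ⟫_ℂ).re = ‖G φ‖ ^ 2 := by rw [hGφ]; exact RCLike.ofReal_re (K := ℂ) _
  have hnorm : ‖⟪φ, G φ⟫_ℂ‖ = ‖G φ‖ ^ 2 := by
    rw [hGφ, RCLike.norm_ofReal, abs_of_nonneg (by positivity)]
  have hφ' : ‖φ‖ ≠ 0 := norm_ne_zero_iff.mpr hφ
  calc ‖⟪ψ, G φ⟫_ℂ‖ ^ 2 ≤ ‖ψ‖ ^ 2 * (‖G φ‖ ^ 2 - ‖⟪φ, G φ⟫_ℂ‖ ^ 2 / ‖φ‖ ^ 2) :=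
        norm_inner_sq_le_of_inner_eq_zero hperp (G φ)
    _ = _ := by
        rw [hre, hnorm]
        field_simp
end

section
/- Let 0 ≤ ε < 1/2, and set α = (√(1-ε) - √ε)² and β = √(1-ε)(√(1-ε) - √ε). Then for every η with 0 ≤ η ≤ ε and all real x, y, the bilinear form B(x,y) = (β - α + η)x² - 2√(η(1-η)) x y + (1 - η - β) y² is nonnegative. -/
/-! Writing `s = √(ε(1-ε)) = √(1-ε)·√ε`, the coefficients of the form are `s - ε + η` and
`s + ε - η`, whose product `s² - (ε - η)²` exceeds `η(1-η)` by `(ε - η)(1 - 2ε) ≥ 0`.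
A binary quadratic form with nonnegative diagonal and nonpositive discriminant is nonnegative. -/

open Real

theorem quadratic_form_nonneg_of_sq_le_mul {a b c : ℝ} (ha : 0 ≤ a) (hc : 0 ≤ c)
    (hb : b ^ 2 ≤ a * c) (x y : ℝ) : 0 ≤ a * x ^ 2 - 2 * b * x * y + c * y ^ 2 := by
  rcases ha.eq_or_lt with rfl | ha
  · obtain rfl : b = 0 := by nlinarith [sq_nonneg b]
    nlinarith [sq_nonneg y]
  · have key : 0 ≤ a * (a * x ^ 2 - 2 * b * x * y + c * y ^ 2) := by
      nlinarith [sq_nonneg (a * x - b * y), sq_nonneg y]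
    exact nonneg_of_mul_nonneg_right (by linarith) ha

theorem mul_one_sub_le_sub_sq {η ε : ℝ} (hη : η ≤ ε) (hε : ε ≤ 1 / 2) :
    η * (1 - η) ≤ ε * (1 - ε) - (ε - η) ^ 2 := by
  nlinarith [mul_nonneg (sub_nonneg.2 hη) (by linarith : (0 : ℝ) ≤ 1 - 2 * ε)]

theorem sqrt_one_sub_mul_sqrt {ε : ℝ} (hε1 : ε ≤ 1) : √(1 - ε) * √ε = √(ε * (1 - ε)) := by
  rw [mul_comm ε, sqrt_mul (by linarith)]

theorem sq_sqrt_one_sub_sub_sqrt {ε : ℝ} (hε0 : 0 ≤ ε) (hε1 : ε ≤ 1) :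
    (√(1 - ε) - √ε) ^ 2 = 1 - 2 * √(ε * (1 - ε)) := by
  rw [← sqrt_one_sub_mul_sqrt hε1]
  linear_combination sq_sqrt (sub_nonneg.2 hε1) + sq_sqrt hε0

theorem sqrt_one_sub_mul_sqrt_one_sub_sub_sqrt {ε : ℝ} (hε1 : ε ≤ 1) :
    √(1 - ε) * (√(1 - ε) - √ε) = 1 - ε - √(ε * (1 - ε)) := by
  rw [← sqrt_one_sub_mul_sqrt hε1]
  linear_combination sq_sqrt (sub_nonneg.2 hε1)

theorem le_sqrt_mul_one_sub {ε : ℝ} (hε0 : 0 ≤ ε) (hε : ε ≤ 1 / 2) : ε ≤ √(ε * (1 - ε)) :=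
  le_sqrt_of_sq_le (by nlinarith)

theorem bilinear_form_nonneg (ε : ℝ) (hε0 : 0 ≤ ε) (hε : ε < 1/2)
    (α β : ℝ)
    (hα : α = (Real.sqrt (1 - ε) - Real.sqrt ε)^2)
    (hβ : β = Real.sqrt (1 - ε) * (Real.sqrt (1 - ε) - Real.sqrt ε)) :
    ∀ η : ℝ, 0 ≤ η → η ≤ ε → ∀ x y : ℝ,
      0 ≤ (β - α + η) * x^2 - 2 * Real.sqrt (η * (1 - η)) * x * y
          + (1 - η - β) * y^2 := by
  intro η hη0 hηε x y
  have hε1 : ε ≤ 1 := by linarith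
  set s := √(ε * (1 - ε))
  have hs : s ^ 2 = ε * (1 - ε) := sq_sqrt (by nlinarith)
  have hεs : ε ≤ s := le_sqrt_mul_one_sub hε0 hε.le
  have hA : β - α + η = s - ε + η := by
    rw [hα, hβ, sq_sqrt_one_sub_sub_sqrt hε0 hε1,
      sqrt_one_sub_mul_sqrt_one_sub_sub_sqrt hε1]
    ring
  have hC : 1 - η - β = s + ε - η := by
    rw [hβ, sqrt_one_sub_mul_sqrt_one_sub_sub_sqrt hε1]
    ring
  rw [hA, hC]
  refine quadratic_form_nonneg_of_sq_le_mul (by linarith) (by linarith) ?_ x y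
  calc √(η * (1 - η)) ^ 2 = η * (1 - η) := sq_sqrt (by nlinarith)
    _ ≤ ε * (1 - ε) - (ε - η) ^ 2 := mul_one_sub_le_sub_sq hηε hε.le
    _ = (s - ε + η) * (s + ε - η) := by rw [← hs]; ring
end

section
/- Let 0 ≤ ε < 1/2, α = (√(1-ε) - √ε)², β = √(1-ε)(√(1-ε) - √ε). Then the conditions for positivity hold: β - α + η ≥ 0, 1 - η - β ≥ 0, and η(1-η) ≤ (1 - η - β)(β - α + η) for all η ∈ [0, ε]. -/
/-! With `s = √ε`, `t = √(1 - ε)` and `s² + t² = 1` one finds `β - α = st - ε` and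
`1 - β = st + ε`, so the product on the right is `(st)² - (ε - η)² = ε(1 - ε) - (ε - η)²`.
It dominates `η(1 - η)` because the difference is `(ε - η)(1 - 2ε) ≥ 0`. -/

open Real

lemma sqrt_one_sub_mul_sub_sub_sq {ε : ℝ} (hε : 0 ≤ ε) :
    √(1 - ε) * (√(1 - ε) - √ε) - (√(1 - ε) - √ε) ^ 2 = √ε * √(1 - ε) - ε := by
  linear_combination -sq_sqrt hε

lemma one_sub_sqrt_one_sub_mul_sub {ε : ℝ} (hε : ε ≤ 1) :
    1 - √(1 - ε) * (√(1 - ε) - √ε) = ε + √ε * √(1 - ε) := by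
  linear_combination -sq_sqrt (sub_nonneg.2 hε)

lemma le_sqrt_mul_sqrt_one_sub {ε : ℝ} (h0 : 0 ≤ ε) (h : ε ≤ 1 / 2) :
    ε ≤ √ε * √(1 - ε) := by
  calc ε = √ε * √ε := (mul_self_sqrt h0).symm
    _ ≤ √ε * √(1 - ε) := by gcongr; linarith

lemma sq_sqrt_mul_sqrt_one_sub {ε : ℝ} (h0 : 0 ≤ ε) (h1 : ε ≤ 1) :
    (√ε * √(1 - ε)) ^ 2 = ε * (1 - ε) := by
  rw [mul_pow, sq_sqrt h0, sq_sqrt (sub_nonneg.2 h1)]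

lemma mul_one_sub_add_sq_sub_le {η ε : ℝ} (hη : η ≤ ε) (hε : ε ≤ 1 / 2) :
    η * (1 - η) + (ε - η) ^ 2 ≤ ε * (1 - ε) := by
  nlinarith [mul_nonneg (sub_nonneg.2 hη) (by linarith : (0 : ℝ) ≤ 1 - 2 * ε)]

theorem positivity_conditions (ε : ℝ) (hε0 : 0 ≤ ε) (hε : ε < 1/2)
    (α β : ℝ)
    (hα : α = (Real.sqrt (1 - ε) - Real.sqrt ε)^2)
    (hβ : β = Real.sqrt (1 - ε) * (Real.sqrt (1 - ε) - Real.sqrt ε)) :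
    ∀ η : ℝ, 0 ≤ η → η ≤ ε →
      0 ≤ β - α + η ∧ 0 ≤ 1 - η - β ∧
        η * (1 - η) ≤ (1 - η - β) * (β - α + η) := by
  intro η hη0 hηε
  have hβα : β - α = √ε * √(1 - ε) - ε := by
    rw [hα, hβ, sqrt_one_sub_mul_sub_sub_sq hε0]
  have hβ' : 1 - β = ε + √ε * √(1 - ε) := by
    rw [hβ, one_sub_sqrt_one_sub_mul_sub (by linarith)]
  have hc := le_sqrt_mul_sqrt_one_sub hε0 hε.le
  refine ⟨by linarith, by linarith, ?_⟩
  calc η * (1 - η) ≤ ε * (1 - ε) - (ε - η) ^ 2 := by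
        linarith [mul_one_sub_add_sq_sub_le hηε hε.le]
    _ = (√ε * √(1 - ε) + (ε - η)) * (√ε * √(1 - ε) - (ε - η)) := by
        rw [← sq_sqrt_mul_sqrt_one_sub hε0 (by linarith)]; ring
    _ = (1 - η - β) * (β - α + η) := by
        rw [sub_right_comm, hβ', add_sub_assoc, hβα]; ring
end

section
/- Let G₁ and G₂ be orthogonal projections on a finite-dimensional Hilbert space, K = G₁G₂G₁, and let V = {ψ : G₁ψ = ψ, G₂ψ = ψ}. Then ε := sup{⟨ψ, G₂ψ⟩ : G₁ψ = ψ, ψ ⊥ V, ‖ψ‖ = 1} equals the largest eigenvalue of K that is strictly less than 1, provided such a ψ exists. -/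
/-!
Write `G₁, G₂` as the orthogonal projections onto subspaces `U₁, U₂`. For `ψ ∈ U₁` one has
`⟪ψ, G₂ ψ⟫ = ⟪K ψ, ψ⟫ = ‖G₂ ψ‖²`; in particular the `1`-eigenspace of `K` is `U₁ ⊓ U₂ = V`, and
`ε` is the top of the numerical range of `K` on `W = U₁ ⊓ Vᗮ`. Since `W` is `K`-invariant, this
maximum is attained at an eigenvector of `K` lying in `W`; its eigenvalue is at most `1`, and not
`1` because `W ⊥ V`. Conversely, an eigenvector for an eigenvalue `μ ∉ {0, 1}` lies in
`U₁ ⊇ range K` and is orthogonal to the `1`-eigenspace `V`, i.e. lies in `W`, so `μ ≤ ε`; and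
`0 ≤ ε` because `⟪K ψ, ψ⟫ ≥ 0`.
-/

open scoped InnerProductSpace
open Metric Module End

theorem Submodule.coe_inter_sphere_zero {R E : Type*} [Ring R] [SeminormedAddCommGroup E]
    [Module R E] (U : Submodule R E) (r : ℝ) :
    (U : Set E) ∩ sphere 0 r = Subtype.val '' sphere (0 : U) r := by
  ext x
  simp [and_comm]

section RayleighOnInvariantSubmodule

variable {𝕜 E : Type*} [RCLike 𝕜] [NormedAddCommGroup E] [InnerProductSpace 𝕜 E]

theorem ContinuousLinearMap.mem_image_reApplyInnerSelf_of_hasEigenvector {T : E →L[𝕜] E}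
    {U : Submodule 𝕜 E} {μ : ℝ} {φ : E} (hφU : φ ∈ U) (hφ : HasEigenvector (T : E →ₗ[𝕜] E) μ φ) :
    μ ∈ T.reApplyInnerSelf '' ((U : Set E) ∩ sphere 0 1) := by
  have hφ0 : ‖φ‖ ≠ 0 := norm_ne_zero_iff.mpr hφ.2
  refine ⟨(‖φ‖⁻¹ : 𝕜) • φ, ⟨U.smul_mem _ hφU, ?_⟩, ?_⟩
  · simp [norm_smul, hφ0]
  · rw [reApplyInnerSelf_apply, map_smul, show T φ = (μ : 𝕜) • φ from hφ.apply_eq_smul,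
      inner_smul_left, inner_smul_right, inner_smul_left, inner_self_eq_norm_sq_to_K]
    simp only [RCLike.conj_ofReal, ← RCLike.ofReal_pow, ← RCLike.ofReal_inv, ← RCLike.ofReal_mul,
      RCLike.ofReal_re]
    field_simp

theorem LinearMap.IsSymmetric.exists_isGreatest_image_reApplyInnerSelf [FiniteDimensional 𝕜 E]
    {T : E →L[𝕜] E} (hT : (T : E →ₗ[𝕜] E).IsSymmetric) {U : Submodule 𝕜 E}
    (hU : U ∈ invtSubmodule (T : E →ₗ[𝕜] E)) (hne : ((U : Set E) ∩ sphere 0 1).Nonempty) :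
    ∃ μ : ℝ, IsGreatest (T.reApplyInnerSelf '' ((U : Set E) ∩ sphere 0 1)) μ ∧
      ∃ v ∈ U, HasEigenvector (T : E →ₗ[𝕜] E) μ v := by
  have := FiniteDimensional.proper_rclike 𝕜 U
  have hU' := (mem_invtSubmodule_iff_forall_mem_of_mem _).mp hU
  let T' : U →L[𝕜] U := ((T : E →ₗ[𝕜] E).restrict hU').toContinuousLinearMap
  have hT' : IsSelfAdjoint T' :=
    ContinuousLinearMap.isSelfAdjoint_iff_isSymmetric.mpr (hT.restrict_invariant hU')
  rw [U.coe_inter_sphere_zero] at hne ⊢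
  obtain ⟨w, hw, hmax⟩ := (isCompact_sphere (0 : U) 1).exists_isMaxOn hne.of_image
    T'.reApplyInnerSelf_continuous.continuousOn
  have hw1 : ‖w‖ = 1 := mem_sphere_zero_iff_norm.mp hw
  have hTw := hT'.eq_smul_self_of_isLocalExtrOn (x₀ := w) (.inr (by rw [hw1]; exact hmax.localize))
  simp only [ContinuousLinearMap.rayleighQuotient, hw1, one_pow, div_one] at hTw
  refine ⟨T'.reApplyInnerSelf w, ⟨⟨w, ⟨w, hw, rfl⟩, rfl⟩, ?_⟩, w, w.2, ?_, ?_⟩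
  · rintro _ ⟨_, ⟨x, hx, rfl⟩, rfl⟩
    exact hmax hx
  · exact mem_eigenspace_iff.mpr (congrArg Subtype.val hTw)
  · simpa using ne_of_mem_sphere hw one_ne_zero

end RayleighOnInvariantSubmodule

namespace Submodule

variable {𝕜 E : Type*} [RCLike 𝕜] [NormedAddCommGroup E] [InnerProductSpace 𝕜 E]
  {U U₁ U₂ : Submodule 𝕜 E} [U.HasOrthogonalProjection] [U₁.HasOrthogonalProjection]
  [U₂.HasOrthogonalProjection]

theorem inner_starProjection_comp_comp_starProjection_of_mem (A : E →L[𝕜] E) {x y : E}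
    (hx : x ∈ U) (hy : y ∈ U) :
    ⟪(U.starProjection ∘L A ∘L U.starProjection) x, y⟫_𝕜 = ⟪A x, y⟫_𝕜 := by
  simp only [ContinuousLinearMap.comp_apply, starProjection_eq_self_iff.mpr hx,
    inner_starProjection_left_eq_right, starProjection_eq_self_iff.mpr hy]

theorem eigenspace_starProjection_comp_comp_starProjection_le (A : E →L[𝕜] E) {μ : 𝕜}
    (hμ : μ ≠ 0) :
    eigenspace (U.starProjection ∘L A ∘L U.starProjection : E →ₗ[𝕜] E) μ ≤ U := by
  intro x hx
  have hKx : (U.starProjection ∘L A ∘L U.starProjection) x = μ • x := mem_eigenspace_iff.mp hx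
  rw [← inv_smul_smul₀ hμ x, ← hKx]
  exact U.smul_mem _ (starProjection_apply_mem U _)

theorem reApplyInnerSelf_starProjection_comp_comp_starProjection {x : E} (hx : x ∈ U₁) :
    (U₁.starProjection ∘L U₂.starProjection ∘L U₁.starProjection).reApplyInnerSelf x =
      ‖U₂.starProjection x‖ ^ 2 := by
  rw [ContinuousLinearMap.reApplyInnerSelf_apply,
    inner_starProjection_comp_comp_starProjection_of_mem _ hx hx, re_inner_starProjection_eq_normSq]
  rfl

theorem eigenspace_starProjection_comp_comp_starProjection_one :
    eigenspace (U₁.starProjection ∘L U₂.starProjection ∘L U₁.starProjection : E →ₗ[𝕜] E) 1 =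
      U₁ ⊓ U₂ := by
  ext x
  constructor
  · intro hx
    have hx₁ : x ∈ U₁ := eigenspace_starProjection_comp_comp_starProjection_le _ one_ne_zero hx
    have hKx : (U₁.starProjection ∘L U₂.starProjection ∘L U₁.starProjection) x = x := by
      simpa using mem_eigenspace_iff.mp hx
    refine ⟨hx₁, (mem_iff_norm_starProjection U₂ x).mpr ?_⟩
    have h := reApplyInnerSelf_starProjection_comp_comp_starProjection (U₂ := U₂) hx₁
    rw [ContinuousLinearMap.reApplyInnerSelf_apply, hKx, inner_self_eq_norm_sq] at h
    exact (pow_left_inj₀ (norm_nonneg _) (norm_nonneg _) two_ne_zero).mp h.symm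
  · rintro ⟨hx₁, hx₂⟩
    rw [mem_eigenspace_iff, one_smul]
    simp [starProjection_eq_self_iff.mpr hx₁, starProjection_eq_self_iff.mpr hx₂]

theorem isGreatest_eigenvalues_lt_one_sSup_reApplyInnerSelf [FiniteDimensional 𝕜 E]
    (hne : ((U₁ ⊓ (U₁ ⊓ U₂)ᗮ : Submodule 𝕜 E) ∩ sphere (0 : E) 1 : Set E).Nonempty) :
    IsGreatest {μ : ℝ | μ < 1 ∧ HasEigenvalue
        (U₁.starProjection ∘L U₂.starProjection ∘L U₁.starProjection : E →ₗ[𝕜] E) μ}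
      (sSup ((U₁.starProjection ∘L U₂.starProjection ∘L U₁.starProjection).reApplyInnerSelf ''
        ((U₁ ⊓ (U₁ ⊓ U₂)ᗮ : Submodule 𝕜 E) ∩ sphere (0 : E) 1))) := by
  set K := U₁.starProjection ∘L U₂.starProjection ∘L U₁.starProjection
  have := FiniteDimensional.complete 𝕜 E
  have hK : (K : E →ₗ[𝕜] E).IsSymmetric :=
    ((isSelfAdjoint_starProjection U₂).conj_starProjection U₁).isSymmetric
  have hK₁ : eigenspace (K : E →ₗ[𝕜] E) 1 = U₁ ⊓ U₂ :=
    eigenspace_starProjection_comp_comp_starProjection_one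
  have hW : U₁ ⊓ (U₁ ⊓ U₂)ᗮ ∈ invtSubmodule (K : E →ₗ[𝕜] E) := by
    refine invtSubmodule.inf_mem (fun x _ ↦ starProjection_apply_mem U₁ _) ?_
    rw [← hK₁]
    exact hK.orthogonalComplement_mem_invtSubmodule (eigenspace_mem_invtSubmodule _ 1)
  obtain ⟨ε, hε, v, hvW, hv⟩ := hK.exists_isGreatest_image_reApplyInnerSelf hW hne
  obtain ⟨ψ, ⟨hψW, hψ⟩, hψε⟩ := hε.1
  rw [reApplyInnerSelf_starProjection_comp_comp_starProjection hψW.1] at hψε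
  rw [hε.csSup_eq]
  refine ⟨⟨lt_of_le_of_ne ?_ ?_, hasEigenvalue_of_hasEigenvector hv⟩, ?_⟩
  · rw [← hψε, ← one_pow 2, ← mem_sphere_zero_iff_norm.mp hψ]
    gcongr
    exact norm_starProjection_apply_le U₂ ψ
  · rintro rfl
    have hv₁₂ : v ∈ U₁ ⊓ U₂ := by simpa [← hK₁] using hv.1
    exact hv.2 ((U₁ ⊓ U₂).inf_orthogonal_eq_bot ▸ ⟨hv₁₂, hvW.2⟩ : v ∈ (⊥ : Submodule 𝕜 E))
  · rintro μ ⟨hμ1, hμ⟩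
    rcases eq_or_ne μ 0 with rfl | hμ0
    · rw [← hψε]
      positivity
    obtain ⟨φ, hφ⟩ := hμ.exists_hasEigenvector
    refine hε.2 (ContinuousLinearMap.mem_image_reApplyInnerSelf_of_hasEigenvector ⟨?_, ?_⟩ hφ)
    · exact eigenspace_starProjection_comp_comp_starProjection_le _ (by exact_mod_cast hμ0) hφ.1
    · rw [← hK₁]
      exact (hK.orthogonalFamily_eigenspaces.isOrtho (by exact_mod_cast hμ1.ne)).le hφ.1

end Submodule

open Submodule in
theorem epsilon_is_largest_eigenvalue_below_one
    {E : Type*} [NormedAddCommGroup E] [InnerProductSpace ℂ E]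
    [FiniteDimensional ℂ E]
    (G₁ G₂ : E →L[ℂ] E)
    (h₁sa : IsSelfAdjoint G₁) (h₁idem : G₁ ∘L G₁ = G₁)
    (h₂sa : IsSelfAdjoint G₂) (h₂idem : G₂ ∘L G₂ = G₂)
    (K : E →L[ℂ] E) (hK : K = G₁ ∘L G₂ ∘L G₁)
    (V : Set E) (hV : V = {ψ : E | G₁ ψ = ψ ∧ G₂ ψ = ψ})
    (S : Set ℝ)
    (hS : S = {x : ℝ | ∃ ψ : E, G₁ ψ = ψ ∧ (∀ v ∈ V, ⟪ψ, v⟫_ℂ = 0) ∧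
        ‖ψ‖ = 1 ∧ x = (⟪ψ, G₂ ψ⟫_ℂ).re})
    (hne : S.Nonempty) :
    IsGreatest {μ : ℝ | μ < 1 ∧
        Module.End.HasEigenvalue (K : E →ₗ[ℂ] E) (μ : ℂ)} (sSup S) := by
  obtain ⟨U₁, _, rfl⟩ := isStarProjection_iff_eq_starProjection.mp ⟨h₁idem, h₁sa⟩
  obtain ⟨U₂, _, rfl⟩ := isStarProjection_iff_eq_starProjection.mp ⟨h₂idem, h₂sa⟩
  subst hK
  have hW (ψ : E) :
      ψ ∈ U₁ ⊓ (U₁ ⊓ U₂)ᗮ ↔ U₁.starProjection ψ = ψ ∧ ∀ v ∈ V, ⟪ψ, v⟫_ℂ = 0 := by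
    have hV' : V = (U₁ ⊓ U₂ : Submodule ℂ E) := by
      ext v
      simp [hV, starProjection_eq_self_iff]
    rw [hV', mem_inf, mem_orthogonal', starProjection_eq_self_iff]
    rfl
  have hval (ψ : E) (hψ : ψ ∈ U₁) :
      (U₁.starProjection ∘L U₂.starProjection ∘L U₁.starProjection).reApplyInnerSelf ψ =
        (⟪ψ, U₂.starProjection ψ⟫_ℂ).re := by
    rw [ContinuousLinearMap.reApplyInnerSelf_apply,
      inner_starProjection_comp_comp_starProjection_of_mem _ hψ hψ, inner_re_symm]
    rfl
  have hSW : S = (U₁.starProjection ∘L U₂.starProjection ∘L U₁.starProjection).reApplyInnerSelf ''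
      ((U₁ ⊓ (U₁ ⊓ U₂)ᗮ : Submodule ℂ E) ∩ sphere 0 1) := by
    ext r
    rw [hS]
    constructor
    · rintro ⟨ψ, h₁, h₂, h₃, rfl⟩
      exact ⟨ψ, ⟨(hW ψ).mpr ⟨h₁, h₂⟩, by simpa using h₃⟩,
        hval ψ (starProjection_eq_self_iff.mp h₁)⟩
    · rintro ⟨ψ, ⟨hψW, hψ⟩, rfl⟩
      obtain ⟨h₁, h₂⟩ := (hW ψ).mp hψW
      exact ⟨ψ, h₁, h₂, by simpa using hψ, hval ψ hψW.1⟩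
  rw [hSW] at hne ⊢
  exact isGreatest_eigenvalues_lt_one_sSup_reApplyInnerSelf hne.of_image
end
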